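/- Let CC be a C-system and let (B, B̃) satisfy the closure conditions (1)–(6), with Mor(CC') defined inductively as: f : Y → pt is in Mor(CC') iff Y ∈ B; f : Y → X with l(X) > 0 is in Mor(CC') iff X ∈ B, ft(f) ∈ Mor(CC') and s_f ∈ B̃. Then for X ∈ B with l(X) > 0 and f : Y → ft(X) in Mor(CC'), the canonical square with sides p_{f*X}, q(f,X), f, p_X is a pull-back square in CC': for any g : Z → f*(X) in Mor(CC) such that g ∘ p_{f*X} ∈ Mor(CC') and g ∘ q(f,X) ∈ Mor(CC'), one has g ∈ Mor(CC'). -/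
import Mathlib


universe u v

/-- A pre-category: sets of objects and morphisms with source, target, identity
and an (everywhere-defined but only meaningful on composable pairs) composition,
written in diagrammatic order: `comp f g` is `f ∘ g` for `f : X → Y`, `g : Y → Z`. -/
structure PreCat (Ob : Type u) (Mor : Type v) where
  dom : Mor → Ob
  cod : Mor → Ob
  id : Ob → Mor
  comp : Mor → Mor → Mor
  id_dom : ∀ X, dom (id X) = X
  id_cod : ∀ X, cod (id X) = X
  dom_comp : ∀ f g, cod f = dom g → dom (comp f g) = dom f
  cod_comp : ∀ f g, cod f = dom g → cod (comp f g) = cod g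
  id_comp : ∀ f, comp (id (dom f)) f = f
  comp_id : ∀ f, comp f (id (cod f)) = f
  comp_assoc : ∀ f g h, cod f = dom g → cod g = dom h →
    comp (comp f g) h = comp f (comp g h)

/-- A C0-system (Definition 2014.07.06.def3). -/
structure C0 (Ob : Type u) (Mor : Type v) extends PreCat Ob Mor where
  l : Ob → ℕ
  pt : Ob
  ft : Ob → Ob
  p : Ob → Mor
  p_dom : ∀ X, dom (p X) = X
  p_cod : ∀ X, cod (p X) = ft X
  /-- `star X f` is `f*X`, meaningful for `0 < l X` and `cod f = ft X`. -/
  star : Ob → Mor → Ob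
  /-- `q X f` is `q(f,X) : f*X → X`, meaningful for `0 < l X` and `cod f = ft X`. -/
  q : Ob → Mor → Mor
  l_pt : l pt = 0
  eq_pt : ∀ X, l X = 0 → X = pt
  l_ft : ∀ X, 0 < l X → l (ft X) = l X - 1
  ft_pt : ft pt = pt
  pt_final : ∀ Y, ∃! f, dom f = Y ∧ cod f = pt
  l_star : ∀ X f, 0 < l X → cod f = ft X → 0 < l (star X f)
  ft_star : ∀ X f, 0 < l X → cod f = ft X → ft (star X f) = dom f
  q_dom : ∀ X f, 0 < l X → cod f = ft X → dom (q X f) = star X f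
  q_cod : ∀ X f, 0 < l X → cod f = ft X → cod (q X f) = X
  square_comm : ∀ X f, 0 < l X → cod f = ft X →
    comp (p (star X f)) f = comp (q X f) (p X)
  star_id : ∀ X, 0 < l X → star X (id (ft X)) = X
  q_id : ∀ X, 0 < l X → q X (id (ft X)) = id X
  star_comp : ∀ X f g, 0 < l X → cod f = ft X → cod g = dom f →
    star X (comp g f) = star (star X f) g
  q_comp : ∀ X f g, 0 < l X → cod f = ft X → cod g = dom f →
    q X (comp g f) = comp (q (star X f) g) (q X f)

/-- `ft(f) = f ∘ p_X` for `f : Y → X`. -/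
def C0.ftMor {Ob : Type u} {Mor : Type v} (C : C0 Ob Mor) (f : Mor) : Mor :=
  C.comp f (C.p (C.cod f))

/-- The axioms of the operation `f ↦ s_f` of a C-system (Definition 2014.07.06.def1),
for `f : Y → X` with `0 < l X`. -/
def C0.IsSOp {Ob : Type u} {Mor : Type v} (C : C0 Ob Mor) (s : Mor → Mor) : Prop :=
  (∀ f, 0 < C.l (C.cod f) → C.dom (s f) = C.dom f) ∧
  (∀ f, 0 < C.l (C.cod f) → C.cod (s f) = C.star (C.cod f) (C.ftMor f)) ∧
  (∀ f, 0 < C.l (C.cod f) →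
    C.comp (s f) (C.p (C.star (C.cod f) (C.ftMor f))) = C.id (C.dom f)) ∧
  (∀ f, 0 < C.l (C.cod f) → C.comp (s f) (C.q (C.cod f) (C.ftMor f)) = f) ∧
  (∀ f U g, 0 < C.l U → C.cod g = C.ft U → 0 < C.l (C.cod f) → C.cod f = C.star U g →
    s f = s (C.comp f (C.q U g)))

/-- A C-system: a C0-system together with an operation `f ↦ s_f` satisfying the axioms. -/
structure CSys (Ob : Type u) (Mor : Type v) extends C0 Ob Mor where
  sOp : Mor → Mor
  sOp_spec : C0.IsSOp toC0 sOp

def CSys.ftMor {Ob : Type u} {Mor : Type v} (C : CSys Ob Mor) (f : Mor) : Mor :=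
  C.comp f (C.p (C.cod f))

/-- `Õb(CC)`: the set of sections `s : ft X → X` of the canonical projections `p_X`,
for `l X > 0`. -/
def CSys.tOb {Ob : Type u} {Mor : Type v} (C : CSys Ob Mor) : Set Mor :=
  {s | 0 < C.l (C.cod s) ∧ C.dom s = C.ft (C.cod s) ∧
    C.comp s (C.p (C.cod s)) = C.id (C.ft (C.cod s))}

/-- Iterated canonical projection `p_{X,i} : X → ft^i X` (meaningful for `i ≤ l X`). -/
def CSys.pIter {Ob : Type u} {Mor : Type v} (C : CSys Ob Mor) (X : Ob) : ℕ → Mor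
  | 0 => C.id X
  | i + 1 => C.comp (CSys.pIter C X i) (C.p (C.ft^[i] X))

/-- Iterated pull-back morphism `q(f,X,i) : f*(X,i) → X` for `f : Y → ft^i X`. -/
def CSys.qIter {Ob : Type u} {Mor : Type v} (C : CSys Ob Mor) (f : Mor) : Ob → ℕ → Mor
  | _, 0 => f
  | X, i + 1 => C.q X (CSys.qIter C f (C.ft X) i)

/-- Iterated pull-back object `f*(X,i)` for `f : Y → ft^i X`. -/
def CSys.starIter {Ob : Type u} {Mor : Type v} (C : CSys Ob Mor) (f : Mor) : Ob → ℕ → Ob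
  | _, 0 => C.dom f
  | X, i + 1 => C.star X (CSys.qIter C f (C.ft X) i)

/-- Pull-back `f*(r,i) : f*(ft X, i-1) → f*(X,i)` of a section `r : ft X → X` along
`q(f, ft X, i-1)` (for `i ≥ 1`); it equals `s` applied to `q(f,ft X,i-1) ∘ r`. -/
def CSys.sectStar {Ob : Type u} {Mor : Type v} (C : CSys Ob Mor)
    (f : Mor) (X : Ob) (r : Mor) (i : ℕ) : Mor :=
  C.sOp (C.comp (C.qIter f (C.ft X) (i - 1)) r)

/-- The diagonal `δ(X) = s_{Id_X} : X → p_X^*(X)`. -/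
def CSys.delta {Ob : Type u} {Mor : Type v} (C : CSys Ob Mor) (X : Ob) : Mor :=
  C.sOp (C.id X)

/-- A C-subsystem: a sub-pre-category closed under the operations defining the
C-system structure. -/
structure Subsystem {Ob : Type u} {Mor : Type v} (C : CSys Ob Mor) where
  obs : Set Ob
  mors : Set Mor
  dom_mem : ∀ f ∈ mors, C.dom f ∈ obs
  cod_mem : ∀ f ∈ mors, C.cod f ∈ obs
  id_mem : ∀ X ∈ obs, C.id X ∈ mors
  comp_mem : ∀ f ∈ mors, ∀ g ∈ mors, C.cod f = C.dom g → C.comp f g ∈ mors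
  pt_mem : C.pt ∈ obs
  ft_mem : ∀ X ∈ obs, C.ft X ∈ obs
  p_mem : ∀ X ∈ obs, C.p X ∈ mors
  star_mem : ∀ X ∈ obs, ∀ f ∈ mors, 0 < C.l X → C.cod f = C.ft X → C.star X f ∈ obs
  q_mem : ∀ X ∈ obs, ∀ f ∈ mors, 0 < C.l X → C.cod f = C.ft X → C.q X f ∈ mors
  s_mem : ∀ f ∈ mors, 0 < C.l (C.cod f) → C.sOp f ∈ mors

/-- The closure conditions (1)-(6) of Proposition 2009.10.15.prop2 on a pair of subsets
`B ⊆ Ob(CC)`, `B̃ ⊆ Õb(CC)`. -/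
def CSys.Closed {Ob : Type u} {Mor : Type v} (C : CSys Ob Mor)
    (B : Set Ob) (Bt : Set Mor) : Prop :=
  C.pt ∈ B ∧
  (∀ X ∈ B, C.ft X ∈ B) ∧
  (∀ s ∈ Bt, C.cod s ∈ B) ∧
  (∀ Y ∈ B, ∀ r ∈ Bt, 0 < C.l Y → ∀ i : ℕ, 1 ≤ i → i ≤ C.l (C.cod r) →
    C.ft Y = C.ft^[i] (C.cod r) → C.sectStar (C.p Y) (C.cod r) r i ∈ Bt) ∧
  (∀ s ∈ Bt, ∀ r ∈ Bt, ∀ i : ℕ, 1 ≤ i →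
    C.cod s = C.ft^[i] (C.cod r) → C.sectStar s (C.cod r) r i ∈ Bt) ∧
  (∀ X ∈ B, 0 < C.l X → C.delta X ∈ Bt)

/-- The inductively defined set of morphisms `Mor(CC')` determined by a pair `(B,B̃)`:
`f : Y → pt` belongs iff `Y ∈ B`; `f : Y → X` with `l X > 0` belongs iff `X ∈ B`,
`ft(f)` belongs and `s_f ∈ B̃`. -/
inductive MorIn {Ob : Type u} {Mor : Type v} (C : CSys Ob Mor)
    (B : Set Ob) (Bt : Set Mor) : Mor → Prop
  | base (f : Mor) : C.cod f = C.pt → C.dom f ∈ B → MorIn C B Bt f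
  | step (f : Mor) : 0 < C.l (C.cod f) → C.cod f ∈ B →
      MorIn C B Bt (C.ftMor f) → C.sOp f ∈ Bt → MorIn C B Bt f

/-- A regular congruence relation on a C-system (Definition 2014.07.04.def1). -/
structure RegCong {Ob : Type u} {Mor : Type v} (C : CSys Ob Mor) where
  rOb : Ob → Ob → Prop
  rMor : Mor → Mor → Prop
  eqv_ob : Equivalence rOb
  eqv_mor : Equivalence rMor
  dom_compat : ∀ f g, rMor f g → rOb (C.dom f) (C.dom g)
  cod_compat : ∀ f g, rMor f g → rOb (C.cod f) (C.cod g)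
  id_compat : ∀ X Y, rOb X Y → rMor (C.id X) (C.id Y)
  ft_compat : ∀ X Y, rOb X Y → rOb (C.ft X) (C.ft Y)
  p_compat : ∀ X Y, rOb X Y → rMor (C.p X) (C.p Y)
  comp_compat : ∀ f f' g g', C.cod f = C.dom g → C.cod f' = C.dom g' →
    rMor f f' → rMor g g' → rMor (C.comp f g) (C.comp f' g')
  star_compat : ∀ X X' f f', 0 < C.l X → 0 < C.l X' →
    C.cod f = C.ft X → C.cod f' = C.ft X' →
    rOb X X' → rMor f f' → rOb (C.star X f) (C.star X' f')
  q_compat : ∀ X X' f f', 0 < C.l X → 0 < C.l X' →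
    C.cod f = C.ft X → C.cod f' = C.ft X' →
    rOb X X' → rMor f f' → rMor (C.q X f) (C.q X' f')
  s_compat : ∀ f f', 0 < C.l (C.cod f) → 0 < C.l (C.cod f') →
    rMor f f' → rMor (C.sOp f) (C.sOp f')
  l_compat : ∀ X Y, rOb X Y → C.l X = C.l Y
  ob_lift : ∀ X F, 0 < C.l X → rOb (C.ft X) F → ∃ XF, rOb X XF ∧ C.ft XF = F
  mor_lift : ∀ f X' Y', rOb X' (C.dom f) → rOb Y' (C.cod f) →
    ∃ f', C.dom f' = X' ∧ C.cod f' = Y' ∧ rMor f' f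

/-- A homomorphism of C-systems, given by a pair of maps on objects and morphisms. -/
structure IsHom {Ob₁ : Type u} {Mor₁ : Type v} {Ob₂ : Type u} {Mor₂ : Type v}
    (C : CSys Ob₁ Mor₁) (D : CSys Ob₂ Mor₂) (F : Ob₁ → Ob₂) (G : Mor₁ → Mor₂) : Prop where
  dom_map : ∀ f, D.dom (G f) = F (C.dom f)
  cod_map : ∀ f, D.cod (G f) = F (C.cod f)
  id_map : ∀ X, G (C.id X) = D.id (F X)
  comp_map : ∀ f g, C.cod f = C.dom g → G (C.comp f g) = D.comp (G f) (G g)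
  l_map : ∀ X, D.l (F X) = C.l X
  pt_map : F C.pt = D.pt
  ft_map : ∀ X, F (C.ft X) = D.ft (F X)
  p_map : ∀ X, G (C.p X) = D.p (F X)
  star_map : ∀ X f, 0 < C.l X → C.cod f = C.ft X → F (C.star X f) = D.star (F X) (G f)
  q_map : ∀ X f, 0 < C.l X → C.cod f = C.ft X → G (C.q X f) = D.q (F X) (G f)
  s_map : ∀ f, 0 < C.l (C.cod f) → G (C.sOp f) = D.sOp (G f)

/-- A pair of equivalence relations `(∼, ≃)` on `(Ob(CC), Õb(CC))` satisfying the
conditions (1)-(4) of Proposition 2014.07.08.prop1.  The relation `≃` is encoded as a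
relation on morphisms supported on `Õb(CC)`. -/
structure TPair {Ob : Type u} {Mor : Type v} (C : CSys Ob Mor) where
  rOb : Ob → Ob → Prop
  rT : Mor → Mor → Prop
  eqv_ob : Equivalence rOb
  rT_supp : ∀ s r, rT s r → s ∈ C.tOb ∧ r ∈ C.tOb
  rT_refl : ∀ s ∈ C.tOb, rT s s
  rT_symm : ∀ s r, rT s r → rT r s
  rT_trans : ∀ s r t, rT s r → rT r t → rT s t
  ft_compat : ∀ X Y, rOb X Y → rOb (C.ft X) (C.ft Y)
  bd_compat : ∀ s r, rT s r → rOb (C.cod s) (C.cod r)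
  T_compat : ∀ Y Y' X X' (i : ℕ), 1 ≤ i → i ≤ C.l X → i ≤ C.l X' →
    0 < C.l Y → 0 < C.l Y' → C.ft Y = C.ft^[i] X → C.ft Y' = C.ft^[i] X' →
    rOb Y Y' → rOb X X' →
    rOb (C.starIter (C.p Y) X i) (C.starIter (C.p Y') X' i)
  Tt_compat : ∀ Y Y' r r' (i : ℕ), 1 ≤ i → i ≤ C.l (C.cod r) → i ≤ C.l (C.cod r') →
    0 < C.l Y → 0 < C.l Y' → C.ft Y = C.ft^[i] (C.cod r) → C.ft Y' = C.ft^[i] (C.cod r') →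
    rOb Y Y' → rT r r' →
    rT (C.sectStar (C.p Y) (C.cod r) r i) (C.sectStar (C.p Y') (C.cod r') r' i)
  S_compat : ∀ s s' X X' (i : ℕ), 1 ≤ i → s ∈ C.tOb → s' ∈ C.tOb →
    C.cod s = C.ft^[i] X → C.cod s' = C.ft^[i] X' → rT s s' → rOb X X' →
    rOb (C.starIter s X i) (C.starIter s' X' i)
  St_compat : ∀ s s' r r' (i : ℕ), 1 ≤ i →
    C.cod s = C.ft^[i] (C.cod r) → C.cod s' = C.ft^[i] (C.cod r') →
    rT s s' → rT r r' →
    rT (C.sectStar s (C.cod r) r i) (C.sectStar s' (C.cod r') r' i)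
  delta_compat : ∀ X X', 0 < C.l X → 0 < C.l X' → rOb X X' →
    rT (C.delta X) (C.delta X')
  l_compat : ∀ X Y, rOb X Y → C.l X = C.l Y
  ob_lift : ∀ X F, 0 < C.l X → rOb (C.ft X) F → ∃ XF, rOb X XF ∧ C.ft XF = F
  sec_lift : ∀ s X', s ∈ C.tOb → rOb X' (C.cod s) →
    ∃ s', s' ∈ C.tOb ∧ C.cod s' = X' ∧ rT s' s

/-- The relation `∼_Mor` on morphisms with codomain of length `m`, defined by induction
on `m` from a pair `(∼, ≃)`:  for `m = 0`, `(X₁ → pt) ∼ (X₂ → pt)` iff `X₁ ∼ X₂`;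
for `m+1`, `f₁ ∼ f₂` iff `ft(f₁) ∼ ft(f₂)` and `s_{f₁} ≃ s_{f₂}`. -/
def CSys.relMorN {Ob : Type u} {Mor : Type v} (C : CSys Ob Mor) (P : TPair C) :
    ℕ → Mor → Mor → Prop
  | 0, f₁, f₂ => C.cod f₁ = C.pt ∧ C.cod f₂ = C.pt ∧ P.rOb (C.dom f₁) (C.dom f₂)
  | m + 1, f₁, f₂ => C.l (C.cod f₁) = m + 1 ∧ C.l (C.cod f₂) = m + 1 ∧
      CSys.relMorN C P m (C.ftMor f₁) (C.ftMor f₂) ∧ P.rT (C.sOp f₁) (C.sOp f₂)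

def CSys.relMor {Ob : Type u} {Mor : Type v} (C : CSys Ob Mor) (P : TPair C)
    (f₁ f₂ : Mor) : Prop :=
  CSys.relMorN C P (C.l (C.cod f₁)) f₁ f₂

section Aux

variable {Ob : Type u} {Mor : Type v} (C : CSys Ob Mor)

theorem ftMor_eq (f : Mor) : C.ftMor f = C.comp f (C.p (C.cod f)) := rfl

theorem sOp_dom (f : Mor) (h : 0 < C.l (C.cod f)) : C.dom (C.sOp f) = C.dom f :=
  C.sOp_spec.1 f h

theorem sOp_cod (f : Mor) (h : 0 < C.l (C.cod f)) :
    C.cod (C.sOp f) = C.star (C.cod f) (C.ftMor f) :=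
  C.sOp_spec.2.1 f h

theorem sOp_sect (f : Mor) (h : 0 < C.l (C.cod f)) :
    C.comp (C.sOp f) (C.p (C.star (C.cod f) (C.ftMor f))) = C.id (C.dom f) :=
  C.sOp_spec.2.2.1 f h

theorem sOp_q (f : Mor) (h : 0 < C.l (C.cod f)) :
    C.comp (C.sOp f) (C.q (C.cod f) (C.ftMor f)) = f :=
  C.sOp_spec.2.2.2.1 f h

theorem qIter_zero (f : Mor) (X : Ob) : C.qIter f X 0 = f := rfl
theorem qIter_succ (f : Mor) (X : Ob) (i : ℕ) :
    C.qIter f X (i+1) = C.q X (C.qIter f (C.ft X) i) := rfl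
theorem starIter_zero (f : Mor) (X : Ob) : C.starIter f X 0 = C.dom f := rfl
theorem starIter_succ (f : Mor) (X : Ob) (i : ℕ) :
    C.starIter f X (i+1) = C.star X (C.qIter f (C.ft X) i) := rfl

theorem ftMor_id (X : Ob) : C.ftMor (C.id X) = C.p X := by
  rw [ftMor_eq, C.id_cod]
  conv_lhs => rw [show C.id X = C.id (C.dom (C.p X)) by rw [C.p_dom]]
  exact C.id_comp (C.p X)

theorem delta_dom (X : Ob) (h : 0 < C.l X) : C.dom (C.delta X) = X := by
  have h' : 0 < C.l (C.cod (C.id X)) := by rw [C.id_cod]; exact h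
  rw [CSys.delta, sOp_dom C _ h', C.id_dom]

theorem delta_cod (X : Ob) (h : 0 < C.l X) : C.cod (C.delta X) = C.star X (C.p X) := by
  have h' : 0 < C.l (C.cod (C.id X)) := by rw [C.id_cod]; exact h
  rw [CSys.delta, sOp_cod C _ h', C.id_cod, ftMor_id]

theorem delta_sect (X : Ob) (h : 0 < C.l X) :
    C.comp (C.delta X) (C.p (C.star X (C.p X))) = C.id X := by
  have h' : 0 < C.l (C.cod (C.id X)) := by rw [C.id_cod]; exact h
  have := sOp_sect C (C.id X) h'
  rw [C.id_cod, ftMor_id, C.id_dom] at this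
  exact this

theorem l_star_eq (X : Ob) (f : Mor) (hX : 0 < C.l X) (hf : C.cod f = C.ft X) :
    C.l (C.star X f) = C.l (C.dom f) + 1 := by
  have h1 := C.l_star X f hX hf
  have h2 := C.ft_star X f hX hf
  have h3 := C.l_ft _ h1
  rw [h2] at h3; omega

theorem ft_cod_delta (W : Ob) (hW0 : 0 < C.l W) : C.ft (C.cod (C.delta W)) = W := by
  rw [delta_cod C W hW0, C.ft_star W (C.p W) hW0 (C.p_cod W), C.p_dom]

theorem shift_len {X : Ob} {i : ℕ} (hl : ∀ j < i + 1, 0 < C.l (C.ft^[j] X)) :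
    ∀ j < i, 0 < C.l (C.ft^[j] (C.ft X)) := by
  intro j hj
  have := hl (j+1) (by omega)
  rwa [Function.iterate_succ_apply] at this

theorem shift_cod (f : Mor) (j i : ℕ) (X : Ob) (h : j ≤ i) (hc : C.cod f = C.ft^[i] X) :
    C.cod f = C.ft^[i - j] (C.ft^[j] X) := by
  rw [← Function.iterate_add_apply]
  have h' : i - j + j = i := by omega
  rw [h']; exact hc

theorem shift_len2 (j i : ℕ) (X : Ob) (h : j ≤ i)
    (hl : ∀ m < i, 0 < C.l (C.ft^[m] X)) :
    ∀ m < i - j, 0 < C.l (C.ft^[m] (C.ft^[j] X)) := by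
  intro m hm
  rw [← Function.iterate_add_apply]
  exact hl (m+j) (by omega)

theorem qIter_cod (f : Mor) : ∀ (i : ℕ) (X : Ob), C.cod f = C.ft^[i] X →
    (∀ j < i, 0 < C.l (C.ft^[j] X)) → C.cod (C.qIter f X i) = X
  | 0, X, hc, _ => hc
  | i+1, X, hc, hl => by
    have hc' : C.cod f = C.ft^[i] (C.ft X) := by rwa [Function.iterate_succ_apply] at hc
    rw [qIter_succ]
    exact C.q_cod X _ (hl 0 (by omega)) (qIter_cod f i (C.ft X) hc' (shift_len C hl))

theorem qIter_dom (f : Mor) : ∀ (i : ℕ) (X : Ob), C.cod f = C.ft^[i] X →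
    (∀ j < i, 0 < C.l (C.ft^[j] X)) → C.dom (C.qIter f X i) = C.starIter f X i
  | 0, _, _, _ => rfl
  | i+1, X, hc, hl => by
    have hc' : C.cod f = C.ft^[i] (C.ft X) := by rwa [Function.iterate_succ_apply] at hc
    rw [qIter_succ, starIter_succ]
    exact C.q_dom X _ (hl 0 (by omega)) (qIter_cod C f i (C.ft X) hc' (shift_len C hl))

theorem starIter_ft (f : Mor) (i : ℕ) (X : Ob) (hc : C.cod f = C.ft^[i+1] X)
    (hl : ∀ j < i+1, 0 < C.l (C.ft^[j] X)) :
    C.ft (C.starIter f X (i+1)) = C.starIter f (C.ft X) i := by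
  have hc' : C.cod f = C.ft^[i] (C.ft X) := by rwa [Function.iterate_succ_apply] at hc
  rw [starIter_succ,
    C.ft_star X _ (hl 0 (by omega)) (qIter_cod C f i (C.ft X) hc' (shift_len C hl))]
  exact qIter_dom C f i (C.ft X) hc' (shift_len C hl)

theorem starIter_pos (f : Mor) (i : ℕ) (X : Ob) (hc : C.cod f = C.ft^[i+1] X)
    (hl : ∀ j < i+1, 0 < C.l (C.ft^[j] X)) : 0 < C.l (C.starIter f X (i+1)) := by
  have hc' : C.cod f = C.ft^[i] (C.ft X) := by rwa [Function.iterate_succ_apply] at hc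
  rw [starIter_succ]
  exact C.l_star X _ (hl 0 (by omega)) (qIter_cod C f i (C.ft X) hc' (shift_len C hl))

theorem starIter_ftIter (f : Mor) : ∀ (j i : ℕ) (X : Ob), j ≤ i →
    C.cod f = C.ft^[i] X → (∀ m < i, 0 < C.l (C.ft^[m] X)) →
    C.ft^[j] (C.starIter f X i) = C.starIter f (C.ft^[j] X) (i - j)
  | 0, i, X, _, _, _ => by simp
  | j+1, i, X, hji, hc, hl => by
    have hji' : j ≤ i := by omega
    rw [Function.iterate_succ_apply', starIter_ftIter f j i X hji' hc hl]
    obtain ⟨k, hk⟩ : ∃ k, i - j = k + 1 := ⟨i - j - 1, by omega⟩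
    have hc2 : C.cod f = C.ft^[k+1] (C.ft^[j] X) := by
      rw [← hk]; exact shift_cod C f j i X hji' hc
    have hl2 : ∀ m < k+1, 0 < C.l (C.ft^[m] (C.ft^[j] X)) := by
      rw [← hk]; exact shift_len2 C j i X hji' hl
    rw [hk, starIter_ft C f k (C.ft^[j] X) hc2 hl2]
    rw [show C.ft^[j+1] X = C.ft (C.ft^[j] X) from Function.iterate_succ_apply' C.ft j X]
    congr 1
    omega

theorem starIter_ftIter_top (f : Mor) (i : ℕ) (X : Ob) (hc : C.cod f = C.ft^[i] X)
    (hl : ∀ m < i, 0 < C.l (C.ft^[m] X)) :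
    C.ft^[i] (C.starIter f X i) = C.dom f := by
  rw [starIter_ftIter C f i i X le_rfl hc hl, Nat.sub_self]
  rfl

theorem starIter_ftIter_pos (f : Mor) (i : ℕ) (X : Ob) (hc : C.cod f = C.ft^[i] X)
    (hl : ∀ m < i, 0 < C.l (C.ft^[m] X)) :
    ∀ j < i, 0 < C.l (C.ft^[j] (C.starIter f X i)) := by
  intro j hj
  rw [starIter_ftIter C f j i X (le_of_lt hj) hc hl]
  obtain ⟨k, hk⟩ : ∃ k, i - j = k + 1 := ⟨i - j - 1, by omega⟩
  have hc2 : C.cod f = C.ft^[k+1] (C.ft^[j] X) := by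
    rw [← hk]; exact shift_cod C f j i X (le_of_lt hj) hc
  have hl2 : ∀ m < k+1, 0 < C.l (C.ft^[m] (C.ft^[j] X)) := by
    rw [← hk]; exact shift_len2 C j i X (le_of_lt hj) hl
  rw [hk]
  exact starIter_pos C f k (C.ft^[j] X) hc2 hl2

theorem le_l_of_pos : ∀ (i : ℕ) (X : Ob), (∀ j < i, 0 < C.l (C.ft^[j] X)) → i ≤ C.l X
  | 0, _, _ => Nat.zero_le _
  | i+1, X, hl => by
    have h0 : 0 < C.l X := hl 0 (by omega)
    have h1 := le_l_of_pos i (C.ft X) (shift_len C hl)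
    have h2 := C.l_ft X h0
    omega

theorem qIter_qIter (h : Mor) (j : ℕ) : ∀ (i : ℕ) (X : Ob),
    C.qIter (C.qIter h (C.ft^[i] X) j) X i = C.qIter h X (j + i)
  | 0, _ => rfl
  | i+1, X => by
    rw [show (j + (i+1)) = (j+i)+1 from rfl, qIter_succ C h X (j+i), qIter_succ]
    rw [Function.iterate_succ_apply, qIter_qIter h j i (C.ft X)]

theorem starIter_qIter (h : Mor) (j i : ℕ) (X : Ob) :
    C.starIter (C.qIter h (C.ft^[i+1] X) j) X (i+1) = C.starIter h X (j + (i+1)) := by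
  rw [show (j + (i+1)) = (j+i)+1 from rfl, starIter_succ, starIter_succ]
  rw [Function.iterate_succ_apply, qIter_qIter C h j i (C.ft X)]

theorem qIter_comp (g f₀ : Mor) (hgf : C.cod g = C.dom f₀) : ∀ (i : ℕ) (X : Ob),
    C.cod f₀ = C.ft^[i] X → (∀ j < i, 0 < C.l (C.ft^[j] X)) →
    C.qIter (C.comp g f₀) X i = C.comp (C.qIter g (C.starIter f₀ X i) i) (C.qIter f₀ X i)
  | 0, _, _, _ => rfl
  | i+1, X, hc, hl => by
    have hc' : C.cod f₀ = C.ft^[i] (C.ft X) := by rwa [Function.iterate_succ_apply] at hc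
    have hl' := shift_len C hl
    have hgc : C.cod g = C.ft^[i] (C.starIter f₀ (C.ft X) i) := by
      rw [starIter_ftIter_top C f₀ i (C.ft X) hc' hl']; exact hgf
    have hlg := starIter_ftIter_pos C f₀ i (C.ft X) hc' hl'
    rw [qIter_succ, qIter_comp g f₀ hgf i (C.ft X) hc' hl']
    rw [C.q_comp X (C.qIter f₀ (C.ft X) i) (C.qIter g (C.starIter f₀ (C.ft X) i) i)
        (hl 0 (by omega)) (qIter_cod C f₀ i (C.ft X) hc' hl')
        (by rw [qIter_cod C g i _ hgc hlg, qIter_dom C f₀ i (C.ft X) hc' hl'])]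
    rw [show C.qIter g (C.starIter f₀ X (i+1)) (i+1)
        = C.q (C.starIter f₀ X (i+1)) (C.qIter g (C.ft (C.starIter f₀ X (i+1))) i) from rfl]
    rw [starIter_ft C f₀ i X hc hl]
    rw [qIter_succ C f₀ X i, starIter_succ]

theorem starIter_comp (g f₀ : Mor) (hgf : C.cod g = C.dom f₀) (i : ℕ) (X : Ob)
    (hc : C.cod f₀ = C.ft^[i] X) (hl : ∀ j < i, 0 < C.l (C.ft^[j] X)) :
    C.starIter (C.comp g f₀) X i = C.starIter g (C.starIter f₀ X i) i := by
  cases i with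
  | zero =>
    rw [starIter_zero, starIter_zero]
    exact C.dom_comp g f₀ hgf
  | succ i =>
    have hc' : C.cod f₀ = C.ft^[i] (C.ft X) := by rwa [Function.iterate_succ_apply] at hc
    have hl' := shift_len C hl
    have hgc : C.cod g = C.ft^[i] (C.starIter f₀ (C.ft X) i) := by
      rw [starIter_ftIter_top C f₀ i (C.ft X) hc' hl']; exact hgf
    have hlg := starIter_ftIter_pos C f₀ i (C.ft X) hc' hl'
    rw [starIter_succ, qIter_comp C g f₀ hgf i (C.ft X) hc' hl']
    rw [C.star_comp X (C.qIter f₀ (C.ft X) i) (C.qIter g (C.starIter f₀ (C.ft X) i) i)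
        (hl 0 (by omega)) (qIter_cod C f₀ i (C.ft X) hc' hl')
        (by rw [qIter_cod C g i _ hgc hlg, qIter_dom C f₀ i (C.ft X) hc' hl'])]
    rw [show C.starIter g (C.starIter f₀ X (i+1)) (i+1)
        = C.star (C.starIter f₀ X (i+1)) (C.qIter g (C.ft (C.starIter f₀ X (i+1))) i) from rfl]
    rw [starIter_ft C f₀ i X hc hl, starIter_succ]

variable {B : Set Ob} {Bt : Set Mor}

theorem core_mem (h : C.Closed B Bt) (t : Mor) (W : Ob) (i : ℕ) (hi : 1 ≤ i)
    (hct : C.cod t = C.ft^[i] W) (hl : ∀ j < i, 0 < C.l (C.ft^[j] W))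
    (hmem : C.sectStar t (C.cod (C.delta W)) (C.delta W) (i+1) ∈ Bt) :
    C.starIter t W i ∈ B := by
  have hW0 : 0 < C.l W := hl 0 hi
  have hpW : C.cod (C.p W) = C.ft W := C.p_cod W
  have hDdom : C.dom (C.delta W) = W := delta_dom C W hW0
  have hDcod : C.cod (C.delta W) = C.star W (C.p W) := delta_cod C W hW0
  have hqc : C.cod (C.qIter t W i) = W := qIter_cod C t i W hct hl
  have hqd : C.dom (C.qIter t W i) = C.starIter t W i := qIter_dom C t i W hct hl
  have h1 : C.sectStar t (C.cod (C.delta W)) (C.delta W) (i+1)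
      = C.sOp (C.comp (C.qIter t W i) (C.delta W)) := by
    show C.sOp (C.comp (C.qIter t (C.ft (C.cod (C.delta W))) (i+1-1)) (C.delta W)) = _
    rw [ft_cod_delta C W hW0, Nat.add_sub_cancel]
  rw [h1] at hmem
  have hcomp_ok : C.cod (C.qIter t W i) = C.dom (C.delta W) := by rw [hqc, hDdom]
  have hEcod : C.cod (C.comp (C.qIter t W i) (C.delta W)) = C.star W (C.p W) := by
    rw [C.cod_comp _ _ hcomp_ok, hDcod]
  have hEl : 0 < C.l (C.cod (C.comp (C.qIter t W i) (C.delta W))) := by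
    rw [hEcod]; exact C.l_star W (C.p W) hW0 hpW
  have hEft : C.ftMor (C.comp (C.qIter t W i) (C.delta W)) = C.qIter t W i := by
    rw [ftMor_eq, hEcod, C.comp_assoc _ _ _ hcomp_ok (by rw [hDcod, C.p_dom])]
    rw [delta_sect C W hW0]
    conv_lhs => rw [show C.id W = C.id (C.cod (C.qIter t W i)) by rw [hqc]]
    exact C.comp_id _
  have hScod : C.cod (C.sOp (C.comp (C.qIter t W i) (C.delta W)))
      = C.star (C.star W (C.p W)) (C.qIter t W i) := by
    rw [sOp_cod C _ hEl, hEcod, hEft]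
  have hmemB := h.2.2.1 _ hmem
  have hmemB2 := h.2.1 _ hmemB
  rw [hScod] at hmemB2
  rw [C.ft_star _ _ (C.l_star W (C.p W) hW0 hpW)
      (by rw [C.ft_star W (C.p W) hW0 hpW, C.p_dom]; exact hqc)] at hmemB2
  rwa [hqd] at hmemB2

theorem starIter_p_mem (h : C.Closed B Bt) (Y W : Ob)
    (hY : Y ∈ B) (hY0 : 0 < C.l Y) (hW : W ∈ B) (i : ℕ) (hi : 1 ≤ i)
    (hct : C.ft Y = C.ft^[i] W) (hl : ∀ j < i, 0 < C.l (C.ft^[j] W)) :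
    C.starIter (C.p Y) W i ∈ B := by
  have hW0 : 0 < C.l W := hl 0 hi
  have hD : C.delta W ∈ Bt := h.2.2.2.2.2 W hW hW0
  apply core_mem C h (C.p Y) W i hi (by rw [C.p_cod]; exact hct) hl
  have hlcodD : C.l (C.cod (C.delta W)) = C.l W + 1 := by
    rw [delta_cod C W hW0, l_star_eq C W (C.p W) hW0 (C.p_cod W), C.p_dom]
  exact h.2.2.2.1 Y hY (C.delta W) hD hY0 (i+1) (by omega)
    (by rw [hlcodD]; exact Nat.succ_le_succ (le_l_of_pos C i W hl))
    (by rw [Function.iterate_succ_apply, ft_cod_delta C W hW0]; exact hct)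

theorem starIter_sec_mem (h : C.Closed B Bt) (s : Mor) (W : Ob)
    (hs : s ∈ Bt) (hW : W ∈ B) (i : ℕ) (hi : 1 ≤ i)
    (hct : C.cod s = C.ft^[i] W) (hl : ∀ j < i, 0 < C.l (C.ft^[j] W)) :
    C.starIter s W i ∈ B := by
  have hW0 : 0 < C.l W := hl 0 hi
  apply core_mem C h s W i hi hct hl
  exact h.2.2.2.2.1 s hs (C.delta W) (h.2.2.2.2.2 W hW hW0) (i+1) (by omega)
    (by rw [Function.iterate_succ_apply, ft_cod_delta C W hW0]; exact hct)

theorem qIter_id : ∀ (j : ℕ) (X : Ob), (∀ m < j, 0 < C.l (C.ft^[m] X)) →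
    C.qIter (C.id (C.ft^[j] X)) X j = C.id X
  | 0, _, _ => rfl
  | j+1, X, hl => by
    rw [qIter_succ, Function.iterate_succ_apply, qIter_id j (C.ft X) (shift_len C hl)]
    exact C.q_id X (hl 0 (by omega))

theorem starIter_id (i : ℕ) (X : Ob) (hl : ∀ m < i+1, 0 < C.l (C.ft^[m] X)) :
    C.starIter (C.id (C.ft^[i+1] X)) X (i+1) = X := by
  rw [starIter_succ, Function.iterate_succ_apply, qIter_id C i (C.ft X) (shift_len C hl)]
  exact C.star_id X (hl 0 (by omega))

theorem to_pt_eq (u v : Mor) (h1 : C.dom u = C.dom v) (h2 : C.cod u = C.pt)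
    (h3 : C.cod v = C.pt) : u = v := by
  obtain ⟨w, _, huniq⟩ := C.pt_final (C.dom u)
  rw [huniq u ⟨rfl, h2⟩, huniq v ⟨h1.symm, h3⟩]

theorem to_pt_starIter_mem (h : C.Closed B Bt) :
    ∀ (n : ℕ) (u : Mor), C.dom u ∈ B → C.l (C.dom u) = n → C.cod u = C.pt →
    ∀ (i : ℕ) (X : Ob), 1 ≤ i → X ∈ B → C.ft^[i] X = C.pt →
    (∀ j < i, 0 < C.l (C.ft^[j] X)) → C.starIter u X i ∈ B := by
  intro n
  induction n with
  | zero =>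
    intro u hu hlu hcu i X hi hX hft hl
    have hdom : C.dom u = C.pt := C.eq_pt _ hlu
    have hid : u = C.id (C.ft^[i] X) :=
      to_pt_eq C u _ (by rw [C.id_dom, hft, hdom]) hcu (by rw [C.id_cod, hft])
    obtain ⟨k, hk⟩ : ∃ k, i = k + 1 := ⟨i-1, by omega⟩
    subst hk
    rw [hid, starIter_id C k X hl]
    exact hX
  | succ n ih =>
    intro u hu hlu hcu i X hi hX hft hl
    have hY0 : 0 < C.l (C.dom u) := by omega
    obtain ⟨v, ⟨hvd, hvc⟩, _⟩ := C.pt_final (C.ft (C.dom u))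
    have hcomp : C.cod (C.p (C.dom u)) = C.dom v := by rw [C.p_cod, hvd]
    have hu_eq : u = C.comp (C.p (C.dom u)) v :=
      to_pt_eq C u _ (by rw [C.dom_comp _ _ hcomp, C.p_dom]) hcu
        (by rw [C.cod_comp _ _ hcomp, hvc])
    have hvcod : C.cod v = C.ft^[i] X := by rw [hvc, hft]
    have hW : C.starIter v X i ∈ B := by
      apply ih v _ _ hvc i X hi hX hft hl
      · rw [hvd]; exact h.2.1 _ hu
      · rw [hvd]; have := C.l_ft _ hY0; omega
    rw [hu_eq, starIter_comp C (C.p (C.dom u)) v hcomp i X hvcod hl]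
    apply starIter_p_mem C h (C.dom u) _ hu hY0 hW i hi
    · rw [starIter_ftIter_top C v i X hvcod hl, hvd]
    · exact starIter_ftIter_pos C v i X hvcod hl

theorem morIn_starIter_mem (h : C.Closed B Bt) {f : Mor} (hf : MorIn C B Bt f) :
    ∀ (i : ℕ) (X : Ob), 1 ≤ i → X ∈ B → C.cod f = C.ft^[i] X →
    (∀ j < i, 0 < C.l (C.ft^[j] X)) → C.starIter f X i ∈ B := by
  induction hf with
  | base f hcod hdom =>
    intro i X hi hX hc hl
    exact to_pt_starIter_mem C h (C.l (C.dom f)) f hdom rfl hcod i X hi hX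
      (by rw [← hc]; exact hcod) hl
  | step f hlf hcf hftm hs ih =>
    intro i X hi hX hc hl
    have hftc : C.cod (C.ftMor f) = C.ft (C.cod f) := by
      rw [ftMor_eq, C.cod_comp _ _ (C.p_dom _).symm, C.p_cod]
    have hc' : C.cod (C.ftMor f) = C.ft^[i+1] X := by
      rw [hftc, hc]
      exact (Function.iterate_succ_apply' C.ft i X).symm
    have hl' : ∀ j < i+1, 0 < C.l (C.ft^[j] X) := by
      intro j hj
      rcases Nat.lt_or_ge j i with hji | hji
      · exact hl j hji
      · have hji2 : j = i := by omega
        subst hji2; rw [← hc]; exact hlf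
    have hW : C.starIter (C.ftMor f) X (i+1) ∈ B := ih (i+1) X (by omega) hX hc' hl'
    have hfq := sOp_q C f hlf
    have hscod : C.cod (C.sOp f) = C.star (C.cod f) (C.ftMor f) := sOp_cod C f hlf
    have hgf : C.cod (C.sOp f) = C.dom (C.q (C.cod f) (C.ftMor f)) := by
      rw [hscod, C.q_dom _ _ hlf hftc]
    have hqc2 : C.cod (C.q (C.cod f) (C.ftMor f)) = C.ft^[i] X := by
      rw [C.q_cod _ _ hlf hftc, hc]
    have key : C.starIter f X i
        = C.starIter (C.sOp f) (C.starIter (C.q (C.cod f) (C.ftMor f)) X i) i := by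
      conv_lhs => rw [← hfq]
      exact starIter_comp C (C.sOp f) _ hgf i X hqc2 hl
    obtain ⟨k, hk⟩ : ∃ k, i = k + 1 := ⟨i - 1, by omega⟩
    have hQ : C.q (C.cod f) (C.ftMor f) = C.qIter (C.ftMor f) (C.ft^[i] X) 1 := by
      rw [← hc]; rfl
    have hQW : C.starIter (C.q (C.cod f) (C.ftMor f)) X i
        = C.starIter (C.ftMor f) X (i+1) := by
      rw [hQ, hk, starIter_qIter C (C.ftMor f) 1 k X]
      congr 1
      omega
    rw [key, hQW]
    apply starIter_sec_mem C h (C.sOp f) _ hs hW i hi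
    · rw [hscod, starIter_ftIter C (C.ftMor f) i (i+1) X (by omega) hc' hl']
      rw [show i + 1 - i = 1 by omega, ← hc]
      rfl
    · intro j hj
      exact starIter_ftIter_pos C (C.ftMor f) (i+1) X hc' hl' j (by omega)

end Aux

/-- Lemma 2009.10.16.l6: the canonical squares are pull-back squares
in `CC'`: if `g ∘ p_{f*X}` and `g ∘ q(f,X)` are in `Mor(CC')` then so is `g`. -/
theorem stmt12 {Ob : Type u} {Mor : Type v} (C : CSys Ob Mor)
    (B : Set Ob) (Bt : Set Mor) (hBt : Bt ⊆ C.tOb) (h : C.Closed B Bt)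
    (X : Ob) (hX : X ∈ B) (hlX : 0 < C.l X)
    (f : Mor) (hf : MorIn C B Bt f) (hfc : C.cod f = C.ft X)
    (g : Mor) (hgc : C.cod g = C.star X f)
    (h₁ : MorIn C B Bt (C.comp g (C.p (C.star X f))))
    (h₂ : MorIn C B Bt (C.comp g (C.q X f))) :
    MorIn C B Bt g := by
  have hlsf : 0 < C.l (C.star X f) := C.l_star X f hlX hfc
  have hlg : 0 < C.l (C.cod g) := by rw [hgc]; exact hlsf
  have hXB : C.star X f ∈ B := by
    have h1i : ∀ j < 1, 0 < C.l (C.ft^[j] X) := by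
      intro j hj
      have hj0 : j = 0 := by omega
      subst hj0; exact hlX
    have hmem := morIn_starIter_mem C h hf 1 X le_rfl hX
      (by rw [Function.iterate_one]; exact hfc) h1i
    exact hmem
  have hqd : C.dom (C.q X f) = C.star X f := C.q_dom X f hlX hfc
  have hcomp : C.cod g = C.dom (C.q X f) := by rw [hgc, hqd]
  have hcodgq : C.cod (C.comp g (C.q X f)) = X := by
    rw [C.cod_comp _ _ hcomp, C.q_cod X f hlX hfc]
  have hsg : C.sOp g ∈ Bt := by
    have heq : C.sOp g = C.sOp (C.comp g (C.q X f)) :=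
      C.sOp_spec.2.2.2.2 g X f hlX hfc hlg hgc
    rw [heq]
    cases h₂ with
    | base _ hcp _ =>
      exfalso
      rw [hcodgq] at hcp
      rw [hcp, C.l_pt] at hlX
      exact Nat.lt_irrefl 0 hlX
    | step _ _ _ _ hs => exact hs
  have hftg : MorIn C B Bt (C.ftMor g) := by
    rw [ftMor_eq, hgc]; exact h₁
  exact MorIn.step g hlg (by rw [hgc]; exact hXB) hftg hsg
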